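/- For every integer n ≥ 1, any mutually uncorrelated set of words of length n over the four-letter DNA alphabet {A,T,G,C} has size at most (4^n / n)·(1 − 1/n)^{n−1}. -/

import Mathlib

/-- The four-letter DNA alphabet. -/
inductive DNA | A | T | G | C
deriving DecidableEq

/-- Hamming distance between two words (of equal length) given as lists. -/
def hammingD {α : Type*} [DecidableEq α] (x y : List α) : ℕ :=
  (x.zip y).countP (fun p => decide (p.1 ≠ p.2))

/-- A binary word has `D`-bounded running digital sum if in every prefix the
numbers of ones and zeros differ by at most `D`. -/
def brds (D : ℕ) (w : List Bool) : Prop :=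
  ∀ k ≤ w.length,
    (((w.take k).count true : ℤ) - ((w.take k).count false : ℤ)).natAbs ≤ D

/-- The letters `G`, `C` of the DNA alphabet. -/
def isGC : DNA → Bool
  | DNA.G => true
  | DNA.C => true
  | _ => false

/-- A DNA word is `D`-GC-prefix-balanced if in every prefix the number of
letters from {G,C} and the number of letters from {A,T} differ by at most `D`. -/
def gcpb (D : ℕ) (w : List DNA) : Prop :=
  ∀ k ≤ w.length,
    (((w.take k).countP isGC : ℤ) - ((w.take k).countP (fun c => !(isGC c)) : ℤ)).natAbs ≤ D

/-- A word is self-uncorrelated if no proper nonempty prefix equals the suffix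
of the same length. -/
def selfUncorr {α : Type*} (w : List α) : Prop :=
  ∀ k, 1 ≤ k → k ≤ w.length - 1 → w.take k ≠ w.drop (w.length - k)

/-- A set of words is mutually uncorrelated if every word is self-uncorrelated
and for every ordered pair of distinct words `x`, `y` no nonempty prefix of `y`
equals a suffix of `x` of the same length. -/
def mutUncorr {α : Type*} (S : Set (List α)) : Prop :=
  (∀ w ∈ S, selfUncorr w) ∧
  ∀ x ∈ S, ∀ y ∈ S, x ≠ y →
    ∀ k, 1 ≤ k → k ≤ x.length → y.take k ≠ x.drop (x.length - k)

/-- A Dyck word: equal numbers of ones and zeros, and every prefix has at least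
as many ones as zeros. -/
def isDyck (w : List Bool) : Prop :=
  w.count true = w.count false ∧
  ∀ k ≤ w.length, (w.take k).count false ≤ (w.take k).count true

/-- The height of a (Dyck) word is at most `D`: in every prefix the number of
ones exceeds the number of zeros by at most `D`. -/
def heightLe (D : ℕ) (w : List Bool) : Prop :=
  ∀ k ≤ w.length, ((w.take k).count true : ℤ) - ((w.take k).count false : ℤ) ≤ (D : ℤ)

/-!
Let `f ℓ` be the number of words of length `ℓ` over a `q`-letter alphabet with no factor in the
code `S` of length `n`. The `S`-free words of length `n + ℓ` differ from the words `c ++ v`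
with `c ∈ S` and `v` `S`-free, and all of them have an `S`-free tail, because codewords overlap
neither each other nor themselves. Hence `f (n + ℓ) + |S| f ℓ ≤ q f (n - 1 + ℓ)`, besides
`f (ℓ + 1) ≤ q f ℓ`, and `f > 0` for `n ≥ 2` since no codeword is constant.

For `g ℓ = f ℓ / q ^ ℓ` and `μ = |S| / q ^ n` this says that `g` is positive, non-increasing and
`g (n + ℓ) + μ g ℓ ≤ g (n - 1 + ℓ)`. On the `k`-th block of length `n - 1` the ratios
`g (ℓ + 1) / g ℓ` are then at most `β k`, where `β 0 = 1` and
`β (k + 1) = 1 - μ / β k ^ (n - 1)`. Since `b ^ (n - 1) (1 - b) ≤ c := (n - 1) ^ (n - 1) / n ^ n`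
for `b ≥ 0`, `β` decreases by at least `μ - c` per step, so `μ > c` would make it negative.
-/

open Finset

lemma List.IsInfix.infix_right_or_overlap {α : Type*} {x v d : List α} (h : d <:+: x ++ v)
    (hlen : x.length < d.length) :
    d <:+: v ∨ ∃ t, 0 < t ∧ t ≤ x.length ∧ d.take t = x.drop (x.length - t) := by
  obtain ⟨a, b, hab⟩ := h
  rw [List.append_assoc, List.append_eq_append_iff] at hab
  obtain ⟨x', rfl, hx'⟩ | ⟨a', rfl, rfl⟩ := hab
  · rcases eq_or_ne x' [] with rfl | hne
    · exact .inl ⟨[], b, by simpa using hx'⟩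
    · refine .inr ⟨x'.length, List.length_pos_iff.2 hne, by simp, ?_⟩
      have := congrArg (List.take x'.length) hx'
      rw [List.take_left, List.take_append_of_le_length (by simp at hlen; omega)] at this
      simpa using this
  · exact .inl ⟨a', b, by simp⟩

lemma mutUncorr.take_ne_drop {α : Type*} {S : Set (List α)} (hS : mutUncorr S) {c d : List α}
    (hc : c ∈ S) (hd : d ∈ S) {t : ℕ} (ht : 0 < t) (htc : t < c.length) :
    d.take t ≠ c.drop (c.length - t) := by
  rcases eq_or_ne c d with rfl | hcd
  · exact hS.1 c hc t ht (by omega)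
  · exact hS.2 c hc d hd hcd t ht htc.le

namespace NonOverlapping

variable {α : Type*} [Fintype α]

variable (α) in
def words (ℓ : ℕ) : Finset (List α) :=
  (univ : Finset (List.Vector α ℓ)).map ⟨List.Vector.toList, List.Vector.toList_injective⟩

lemma mem_words {ℓ : ℕ} {w : List α} : w ∈ words α ℓ ↔ w.length = ℓ := by
  simp only [words, mem_map, mem_univ, true_and, Function.Embedding.coeFn_mk]
  exact ⟨fun ⟨v, hv⟩ => hv ▸ v.toList_length, fun h => ⟨⟨w, h⟩, rfl⟩⟩

lemma card_words (ℓ : ℕ) : #(words α ℓ) = Fintype.card α ^ ℓ := by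
  simp [words, card_vector]

variable [DecidableEq α]

def avoiding (S : Finset (List α)) (ℓ : ℕ) : Finset (List α) :=
  (words α ℓ).filter fun w => ∀ c ∈ S, ¬ c <:+: w

variable {S : Finset (List α)}

lemma mem_avoiding {ℓ : ℕ} {w : List α} :
    w ∈ avoiding S ℓ ↔ w.length = ℓ ∧ ∀ c ∈ S, ¬ c <:+: w := by
  simp [avoiding, mem_words]

lemma tail_mem_avoiding {ℓ : ℕ} {w : List α} (hw : w ∈ avoiding S (ℓ + 1)) :
    w.tail ∈ avoiding S ℓ := by
  rw [mem_avoiding] at hw ⊢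
  exact ⟨by simp [hw.1], fun c hc h => hw.2 c hc (h.trans (List.tail_suffix w).isInfix)⟩

lemma mem_image₂_cons_of_tail_mem {A : Finset (List α)} {w : List α} (hw : w ≠ [])
    (h : w.tail ∈ A) : w ∈ image₂ List.cons univ A := by
  obtain ⟨a, t, rfl⟩ := List.exists_cons_of_ne_nil hw
  exact mem_image₂_of_mem (mem_univ a) h

lemma card_image₂_cons (A : Finset (List α)) :
    #(image₂ List.cons univ A) = Fintype.card α * #A :=
  card_image₂ (fun _ _ _ _ h => List.cons_eq_cons.1 h) _ _

lemma card_avoiding_succ_le (ℓ : ℕ) :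
    #(avoiding S (ℓ + 1)) ≤ Fintype.card α * #(avoiding S ℓ) := by
  rw [← card_image₂_cons]
  refine card_le_card fun w hw => mem_image₂_cons_of_tail_mem ?_ (tail_mem_avoiding hw)
  rintro rfl
  simp [mem_avoiding] at hw

variable {N : ℕ}

lemma tail_append_mem_avoiding (hlen : ∀ w ∈ S, w.length = N + 1)
    (hmu : mutUncorr (S : Set (List α))) {c v : List α} {ℓ : ℕ} (hc : c ∈ S)
    (hv : v ∈ avoiding S ℓ) : c.tail ++ v ∈ avoiding S (N + ℓ) := by
  rw [mem_avoiding] at hv ⊢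
  refine ⟨by simp [hlen c hc, hv.1], fun d hd hdv => ?_⟩
  rcases hdv.infix_right_or_overlap (by simp [hlen c hc, hlen d hd]) with hdv | ⟨t, ht, htc, heq⟩
  · exact hv.2 d hd hdv
  · refine hmu.take_ne_drop hc hd ht (by simp at htc; omega) ?_
    rw [heq, List.drop_tail, List.length_tail]
    congr 1
    simp only [List.length_tail] at htc
    omega

lemma card_avoiding_add_card_mul_le (hlen : ∀ w ∈ S, w.length = N + 1)
    (hmu : mutUncorr (S : Set (List α))) (ℓ : ℕ) :
    #(avoiding S (N + 1 + ℓ)) + #S * #(avoiding S ℓ) ≤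
      Fintype.card α * #(avoiding S (N + ℓ)) := by
  set U := image₂ (· ++ ·) S (avoiding S ℓ)
  have hU : #U = #S * #(avoiding S ℓ) := by
    refine card_image₂_iff.2 fun p hp q hq hpq => ?_
    simp only [Set.mem_prod, mem_coe] at hp hq
    obtain ⟨h1, h2⟩ := List.append_inj hpq (by rw [hlen _ hp.1, hlen _ hq.1])
    exact Prod.ext h1 h2
  have hdisj : Disjoint (avoiding S (N + 1 + ℓ)) U := by
    refine disjoint_right.2 fun w hw hwa => ?_
    obtain ⟨c, hc, v, -, rfl⟩ := mem_image₂.1 hw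
    exact (mem_avoiding.1 hwa).2 c hc (List.infix_append [] c v)
  have hsub : avoiding S (N + 1 + ℓ) ∪ U ⊆ image₂ List.cons univ (avoiding S (N + ℓ)) := by
    refine union_subset (fun w hw => ?_) (fun w hw => ?_)
    · rw [Nat.add_right_comm] at hw
      refine mem_image₂_cons_of_tail_mem ?_ (tail_mem_avoiding hw)
      rintro rfl
      simp [mem_avoiding] at hw
    · obtain ⟨c, hc, v, hv, rfl⟩ := mem_image₂.1 hw
      have hne : c ≠ [] := List.ne_nil_of_length_pos (by simp [hlen c hc])
      refine mem_image₂_cons_of_tail_mem (by simp [hne]) ?_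
      rw [List.tail_append_of_ne_nil hne]
      exact tail_append_mem_avoiding hlen hmu hc hv
  calc #(avoiding S (N + 1 + ℓ)) + #S * #(avoiding S ℓ)
      = #(avoiding S (N + 1 + ℓ) ∪ U) := by rw [card_union_of_disjoint hdisj, hU]
    _ ≤ Fintype.card α * #(avoiding S (N + ℓ)) :=
      (card_le_card hsub).trans_eq (card_image₂_cons _)

lemma avoiding_nonempty [Nonempty α] (hN : 1 ≤ N) (hlen : ∀ w ∈ S, w.length = N + 1)
    (hself : ∀ w ∈ S, selfUncorr w) (ℓ : ℕ) : (avoiding S ℓ).Nonempty := by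
  obtain ⟨a⟩ := ‹Nonempty α›
  refine ⟨List.replicate ℓ a, mem_avoiding.2 ⟨List.length_replicate, fun c hc hca => ?_⟩⟩
  obtain ⟨m, -, rfl⟩ := List.sublist_replicate_iff.1 hca.sublist
  have hm : m = N + 1 := by simpa using hlen _ hc
  refine hself _ hc 1 le_rfl (by simp; omega) ?_
  simp [List.take_replicate, List.drop_replicate, hm]

end NonOverlapping

section Recurrence

lemma succ_mul_pow_le_one_add_mul_pow_succ (m : ℕ) {t : ℝ} (ht : 0 ≤ t) :
    (m + 1) * t ^ m ≤ 1 + m * t ^ (m + 1) := by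
  induction m with
  | zero => simp
  | succ m ih =>
    have key : 0 ≤ (m + 1 : ℝ) * t ^ m * (t - 1) ^ 2 := by positivity
    have e1 : t ^ (m + 1) = t ^ m * t := pow_succ t m
    have e2 : t ^ (m + 2) = t ^ m * t * t := by rw [pow_succ, pow_succ]
    push_cast
    nlinarith

lemma pow_mul_one_sub_le (N : ℕ) {b : ℝ} (hb : 0 ≤ b) :
    b ^ N * (1 - b) ≤ N ^ N / (N + 1) ^ (N + 1) := by
  rcases N.eq_zero_or_pos with rfl | hN
  · simpa using hb
  have hN' : (0 : ℝ) < N := by exact_mod_cast hN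
  -- the maximum is attained at `b = N / (N + 1)`; rescale so that it sits at `1`
  have h := succ_mul_pow_le_one_add_mul_pow_succ N (t := (N + 1) * b / N) (by positivity)
  rw [div_pow, div_pow, mul_pow, mul_pow] at h
  field_simp at h
  have key : (N + 1 : ℝ) ^ (N + 1) * b ^ N ≤ N ^ N + (N + 1) ^ (N + 1) * b ^ N * b := by
    refine le_of_mul_le_mul_left ?_ (by positivity : (0 : ℝ) < N ^ N * N)
    calc _ = (N + 1) * (N + 1) ^ N * b ^ N * N ^ (N + 1) := by ring
      _ ≤ _ := h
      _ = _ := by ring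
  rw [le_div_iff₀ (by positivity)]
  linarith

-- `ratioBound μ N k` bounds `g (ℓ + 1) / g ℓ` for `ℓ ≥ k * N`.
noncomputable def ratioBound (μ : ℝ) (N : ℕ) : ℕ → ℝ
  | 0 => 1
  | k + 1 => 1 - μ / ratioBound μ N k ^ N

variable {N : ℕ} {μ : ℝ} {g : ℕ → ℝ}

lemma succ_le_ratioBound_mul (hpos : ∀ ℓ, 0 < g ℓ) (hmono : ∀ ℓ, g (ℓ + 1) ≤ g ℓ)
    (hrec : ∀ ℓ, g (N + 1 + ℓ) + μ * g ℓ ≤ g (N + ℓ)) (hμ : 0 ≤ μ) (k ℓ : ℕ) :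
    g (k * N + ℓ + 1) ≤ ratioBound μ N k * g (k * N + ℓ) := by
  induction k generalizing ℓ with
  | zero => simpa [ratioBound] using hmono ℓ
  | succ k ih =>
    set β := ratioBound μ N k
    have hβ : 0 < β := pos_of_mul_pos_left ((hpos _).trans_le (ih 0)) (hpos _).le
    have hgeom : g ((k + 1) * N + ℓ) ≤ β ^ N * g (k * N + ℓ) := by
      have := le_geom (u := fun i => g (k * N + ℓ + i)) hβ.le N
        fun i _ => by simpa [add_assoc] using ih (ℓ + i)
      simpa [add_mul, add_right_comm] using this
    have hrec' := hrec (k * N + ℓ)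
    rw [show N + 1 + (k * N + ℓ) = (k + 1) * N + ℓ + 1 by ring,
      show N + (k * N + ℓ) = (k + 1) * N + ℓ by ring] at hrec'
    have hlow : μ * (g ((k + 1) * N + ℓ) / β ^ N) ≤ μ * g (k * N + ℓ) :=
      mul_le_mul_of_nonneg_left ((div_le_iff₀' (by positivity)).2 hgeom) hμ
    calc g ((k + 1) * N + ℓ + 1) ≤ g ((k + 1) * N + ℓ) - μ * g (k * N + ℓ) := by linarith
      _ ≤ g ((k + 1) * N + ℓ) - μ * (g ((k + 1) * N + ℓ) / β ^ N) := by linarith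
      _ = ratioBound μ N (k + 1) * g ((k + 1) * N + ℓ) := by
        simp only [ratioBound, β]
        ring

lemma ratioBound_pos (hpos : ∀ ℓ, 0 < g ℓ) (hmono : ∀ ℓ, g (ℓ + 1) ≤ g ℓ)
    (hrec : ∀ ℓ, g (N + 1 + ℓ) + μ * g ℓ ≤ g (N + ℓ)) (hμ : 0 ≤ μ) (k : ℕ) :
    0 < ratioBound μ N k :=
  pos_of_mul_pos_left ((hpos _).trans_le (succ_le_ratioBound_mul hpos hmono hrec hμ k 0))
    (hpos _).le

lemma one_sub_div_pow_le {b : ℝ} (hb : 0 < b) (hb1 : b ≤ 1)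
    (hμ : (N : ℝ) ^ N / (N + 1) ^ (N + 1) ≤ μ) :
    1 - μ / b ^ N ≤ b - (μ - N ^ N / (N + 1) ^ (N + 1)) := by
  have hbN : 0 < b ^ N := pow_pos hb N
  have hmax := pow_mul_one_sub_le N hb.le
  have hgap : 0 ≤ (μ - N ^ N / (N + 1) ^ (N + 1)) * (1 - b ^ N) :=
    mul_nonneg (sub_nonneg.2 hμ) (sub_nonneg.2 (pow_le_one₀ hb.le hb1))
  have : 1 - b + (μ - N ^ N / (N + 1) ^ (N + 1)) ≤ μ / b ^ N := by
    rw [le_div_iff₀ hbN]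
    nlinarith
  linarith

theorem le_of_pos_antitone_recurrence (hpos : ∀ ℓ, 0 < g ℓ)
    (hmono : ∀ ℓ, g (ℓ + 1) ≤ g ℓ)
    (hrec : ∀ ℓ, g (N + 1 + ℓ) + μ * g ℓ ≤ g (N + ℓ)) :
    μ ≤ N ^ N / (N + 1) ^ (N + 1) := by
  set c : ℝ := N ^ N / (N + 1) ^ (N + 1)
  by_contra! hμ
  have hμ0 : 0 ≤ μ := (by positivity : (0 : ℝ) ≤ c).trans hμ.le
  have hβ := ratioBound_pos hpos hmono hrec hμ0
  have hdecay : ∀ k : ℕ, ratioBound μ N k ≤ 1 - k * (μ - c) := by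
    intro k
    induction k with
    | zero => simp [ratioBound]
    | succ k ih =>
      have := one_sub_div_pow_le (hβ k) (ih.trans (by nlinarith)) hμ.le
      simp only [ratioBound] at this ⊢
      push_cast
      linarith
  obtain ⟨k, hk⟩ := exists_nat_gt (1 / (μ - c))
  rw [div_lt_iff₀ (sub_pos.2 hμ)] at hk
  linarith [hdecay k, hβ k]

theorem le_of_pos_geom_recurrence {q M : ℝ} {f : ℕ → ℝ} (hq : 0 < q)
    (hpos : ∀ ℓ, 0 < f ℓ) (hstep : ∀ ℓ, f (ℓ + 1) ≤ q * f ℓ)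
    (hrec : ∀ ℓ, f (N + 1 + ℓ) + M * f ℓ ≤ q * f (N + ℓ)) :
    M ≤ q ^ (N + 1) * (N ^ N / (N + 1) ^ (N + 1)) := by
  have hμ := le_of_pos_antitone_recurrence (g := fun ℓ => f ℓ / q ^ ℓ)
    (μ := M / q ^ (N + 1))
    (fun ℓ => div_pos (hpos ℓ) (pow_pos hq ℓ))
    (fun ℓ => by
      rw [div_le_div_iff₀ (by positivity) (by positivity), pow_succ]
      nlinarith [hstep ℓ, pow_pos hq ℓ])
    (fun ℓ => calc
      f (N + 1 + ℓ) / q ^ (N + 1 + ℓ) + M / q ^ (N + 1) * (f ℓ / q ^ ℓ)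
          = (f (N + 1 + ℓ) + M * f ℓ) / q ^ (N + 1 + ℓ) := by field_simp; ring
        _ ≤ q * f (N + ℓ) / q ^ (N + 1 + ℓ) := by gcongr; exact hrec ℓ
        _ = f (N + ℓ) / q ^ (N + ℓ) := by field_simp; ring)
  rwa [div_le_iff₀' (by positivity)] at hμ

end Recurrence

open NonOverlapping in
theorem mutUncorr.card_le {α : Type*} [Fintype α] [DecidableEq α] [Nonempty α] {N : ℕ}
    {S : Finset (List α)} (hlen : ∀ w ∈ S, w.length = N + 1)
    (hmu : mutUncorr (S : Set (List α))) :
    (#S : ℝ) ≤ Fintype.card α ^ (N + 1) * (N ^ N / (N + 1) ^ (N + 1)) := by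
  rcases N.eq_zero_or_pos with rfl | hN
  · have : #S ≤ #(words α 1) := card_le_card fun w hw => mem_words.2 (hlen w hw)
    rw [card_words] at this
    simpa using (by exact_mod_cast this : (#S : ℝ) ≤ Fintype.card α ^ 1)
  have hq : (0 : ℝ) < Fintype.card α := by exact_mod_cast Fintype.card_pos
  refine le_of_pos_geom_recurrence (f := fun ℓ => (#(avoiding S ℓ) : ℝ)) hq
    (fun ℓ => by exact_mod_cast (avoiding_nonempty hN hlen hmu.1 ℓ).card_pos)
    (fun ℓ => by exact_mod_cast card_avoiding_succ_le ℓ)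
    (fun ℓ => by exact_mod_cast card_avoiding_add_card_mul_le hlen hmu ℓ)

instance : Fintype DNA := ⟨{DNA.A, DNA.T, DNA.G, DNA.C}, fun x => by cases x <;> simp⟩

instance : Nonempty DNA := ⟨DNA.A⟩

/-- any mutually uncorrelated set of DNA words of length `n` has
size at most `(4^n / n) * (1 - 1/n)^(n-1)`. -/
theorem stmt4 (n : ℕ) (hn : 1 ≤ n) (S : Finset (List DNA))
    (hlen : ∀ w ∈ S, w.length = n)
    (hmu : mutUncorr (S : Set (List DNA))) :
    (S.card : ℝ) ≤ (4 ^ n : ℝ) / n * (1 - 1 / n) ^ (n - 1) := by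
  obtain ⟨N, rfl⟩ : ∃ N, n = N + 1 := ⟨n - 1, by omega⟩
  have hbound := mutUncorr.card_le hlen hmu
  have hcard : Fintype.card DNA = 4 := rfl
  rw [hcard] at hbound
  convert hbound using 1
  have hN : (N + 1 : ℝ) ≠ 0 := by positivity
  rw [Nat.add_sub_cancel, Nat.cast_add_one, one_sub_div hN, add_sub_cancel_right, div_pow,
    pow_succ _ N]
  push_cast
  field_simp
  ring
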